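/- The calculus NMVL_A^dd, obtained from NMVL_A by replacing table axioms with the distributively dual axioms (∗(φ₁,…,φ_ℓ),k) → Λ for all Λ ∈ ⋁(∗(φ₁,…,φ_ℓ)×k)⁻¹, is sound and strongly complete: Σ ⊢_{NMVL_A^dd} S iff Σ ⊨ S. -/

import Mathlib

/-- Formulas over a set `C` of connectives (applied to lists of arguments). -/
inductive Fm (C : Type) : Type
  | atom : ℕ → Fm C
  | app : C → List (Fm C) → Fm C

noncomputable instance {C : Type} : DecidableEq (Fm C) := Classical.decEq _

/-- A sequent of finite sets of labelled formulas. -/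
structure Sequent (C : Type) [DecidableEq C] (n : ℕ) where
  ant : Finset (Fm C × Fin n)
  suc : Finset (Fm C × Fin n)

variable {C : Type} [DecidableEq C] {n : ℕ}

/-- A valuation legal w.r.t. the non-deterministic tables `tbl`. -/
def IsVal (tbl : C → List (Fin n) → Finset (Fin n)) (v : Fm C → Fin n) : Prop :=
  ∀ c args, v (Fm.app c args) ∈ tbl c (args.map v)

/-- A valuation satisfies a sequent. -/
def Sat (v : Fm C → Fin n) (S : Sequent C n) : Prop :=
  (∀ p ∈ S.ant, v p.1 = p.2) → ∃ p ∈ S.suc, v p.1 = p.2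

/-- Semantic entailment. -/
def Entails (tbl : C → List (Fin n) → Finset (Fin n)) (H : Set (Sequent C n)) (S : Sequent C n) : Prop :=
  ∀ v : Fm C → Fin n, IsVal tbl v → (∀ T ∈ H, Sat v T) → Sat v S

/-- The family (∗(φ₁,…,φ_ℓ)×k)⁻¹ of antecedent sets. -/
def Theta (tbl : C → List (Fin n) → Finset (Fin n)) (c : C) (args : List (Fm C)) (k : Fin n) :
    Set (Finset (Fm C × Fin n)) :=
  { Θ | ∃ ks : List (Fin n), ks.length = args.length ∧ k ∈ tbl c ks ∧ Θ = (args.zip ks).toFinset }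

/-- Λ ∈ ⋁(∗(φ₁,…,φ_ℓ)×k)⁻¹ : a choice set hitting each Θ_q and contained in their union. -/
def Choice (tbl : C → List (Fin n) → Finset (Fin n)) (c : C) (args : List (Fm C)) (k : Fin n)
    (Λ : Finset (Fm C × Fin n)) : Prop :=
  (∀ Θ ∈ Theta tbl c args k, ∃ x ∈ Θ, x ∈ Λ) ∧
  (∀ x ∈ Λ, ∃ Θ ∈ Theta tbl c args k, x ∈ Θ)

/-- Which optional axioms/rules a calculus has. -/
structure Rules where
  tableAx : Bool      -- table axioms (2)
  tableRuleS : Bool   -- succedent table rules (10)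
  dualAx : Bool       -- distributively dual axioms (13)
  anteRule : Bool     -- antecedent introduction rules (17)
  multiShift : Bool   -- K-L-multi-shift (16)
  cut : Bool
  res : Bool

/-- Derivability from hypothesis sequents `H`; axioms (ψ,k)→(ψ,k), L-shift, R-shift and
weakenings are always present, the other axioms/rules are governed by `R`. -/
inductive Deriv (R : Rules) (tbl : C → List (Fin n) → Finset (Fin n)) (H : Set (Sequent C n)) :
    Sequent C n → Prop
  | hyp {S} : S ∈ H → Deriv R tbl H S
  | ax (ψ : Fm C) (k : Fin n) : Deriv R tbl H ⟨{(ψ, k)}, {(ψ, k)}⟩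
  | tableAx (c : C) (args : List (Fm C)) (ks : List (Fin n))
      (hlen : ks.length = args.length) (h : R.tableAx = true) :
      Deriv R tbl H ⟨(args.zip ks).toFinset, (tbl c ks).image (fun k => (Fm.app c args, k))⟩
  | lshift {Γ Δ} (φ : Fm C) (k : Fin n) :
      Deriv R tbl H ⟨insert (φ, k) Γ, Δ⟩ →
      Deriv R tbl H ⟨Γ, Δ ∪ ({k}ᶜ : Finset (Fin n)).image (fun k' => (φ, k'))⟩
  | rshift {Γ Δ} (φ : Fm C) {k' k'' : Fin n} (h : k' ≠ k'') :
      Deriv R tbl H ⟨Γ, insert (φ, k') Δ⟩ → Deriv R tbl H ⟨insert (φ, k'') Γ, Δ⟩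
  | lweak {Γ Δ} (φ : Fm C) (k : Fin n) :
      Deriv R tbl H ⟨Γ, Δ⟩ → Deriv R tbl H ⟨insert (φ, k) Γ, Δ⟩
  | rweak {Γ Δ} (φ : Fm C) (k : Fin n) :
      Deriv R tbl H ⟨Γ, Δ⟩ → Deriv R tbl H ⟨Γ, insert (φ, k) Δ⟩
  | cut {Γ Δ} (φ : Fm C) (k : Fin n) (h : R.cut = true) :
      Deriv R tbl H ⟨Γ, insert (φ, k) Δ⟩ → Deriv R tbl H ⟨insert (φ, k) Γ, Δ⟩ →
      Deriv R tbl H ⟨Γ, Δ⟩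
  | res {Γ Δ' Δ''} (φ : Fm C) {k' k'' : Fin n} (h : R.res = true) (hk : k' ≠ k'') :
      Deriv R tbl H ⟨Γ, insert (φ, k') Δ'⟩ → Deriv R tbl H ⟨Γ, insert (φ, k'') Δ''⟩ →
      Deriv R tbl H ⟨Γ, Δ' ∪ Δ''⟩
  | tableRuleS {Γ Δ} (c : C) (args : List (Fm C)) (ks : List (Fin n))
      (hlen : ks.length = args.length) (h : R.tableRuleS = true)
      (prem : ∀ p ∈ args.zip ks, Deriv R tbl H ⟨Γ, insert p Δ⟩) :
      Deriv R tbl H ⟨Γ, Δ ∪ (tbl c ks).image (fun k => (Fm.app c args, k))⟩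
  | dualAx (c : C) (args : List (Fm C)) (k : Fin n) (Λ : Finset (Fm C × Fin n))
      (h : R.dualAx = true) (hΛ : Choice tbl c args k Λ) :
      Deriv R tbl H ⟨{(Fm.app c args, k)}, Λ⟩
  | anteRule {Γ Δ} (c : C) (args : List (Fm C)) (k : Fin n) (h : R.anteRule = true)
      (prem : ∀ ks : List (Fin n), ks.length = args.length → k ∈ tbl c ks →
        Deriv R tbl H ⟨Γ ∪ (args.zip ks).toFinset, Δ⟩) :
      Deriv R tbl H ⟨insert (Fm.app c args, k) Γ, Δ⟩
  | multiShift {Γ Δ} (φ : Fm C) (K : Finset (Fin n)) (h : R.multiShift = true)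
      (hK : K ≠ Finset.univ)
      (prem : ∀ k ∈ K, Deriv R tbl H ⟨insert (φ, k) Γ, Δ⟩) :
      Deriv R tbl H ⟨Γ, Δ ∪ Kᶜ.image (fun k' => (φ, k'))⟩

/-- NMVL_A : table axioms, cut and resolution. -/
def NMVL_A : Rules := ⟨true, false, false, false, false, true, true⟩
/-- NMVL_A with cut but without resolution. -/
def NMVL_A_cut : Rules := ⟨true, false, false, false, false, true, false⟩
/-- NMVL_A with resolution but without cut. -/
def NMVL_A_res : Rules := ⟨true, false, false, false, false, false, true⟩
/-- NMVL_R : succedent table rules, cut and resolution. -/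
def NMVL_R : Rules := ⟨false, true, false, false, false, true, true⟩
/-- NMVL_R without cut and resolution. -/
def NMVL_R_cf : Rules := ⟨false, true, false, false, false, false, false⟩
/-- NMVL_A^dd : distributively dual axioms, cut and resolution. -/
def NMVL_Add : Rules := ⟨false, false, true, false, false, true, true⟩
/-- NMVL_R^sd : antecedent table rules, multi-shift, cut and resolution. -/
def NMVL_Rsd : Rules := ⟨false, false, false, true, true, true, true⟩

/-!
Soundness is checked rule by rule. For completeness, suppose `S` is not derivable and extend
`S.ant`, by Zorn's lemma, to a maximal set `M` of labelled formulas no finite part of which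
derives `S.suc`. Cutting on all `n` values of `φ` shows that `M` gives `φ` some value, and the
axioms with R-shift show it gives only one, so `M` is the graph of a map `v`. R-shift moves a
false succedent to the antecedent, so `v` satisfies every derivable sequent, in particular the
hypotheses. If `v(∗(φ₁,…,φ_ℓ)) = k ∉ ∗(v(φ₁),…,v(φ_ℓ))`, every `Θ ∈ (∗(φ₁,…,φ_ℓ)×k)⁻¹` contains
a pair that is false under `v`; these pairs form a `Λ` for which `v` falsifies the dual axiom
`(∗(φ₁,…,φ_ℓ),k) → Λ`. Hence `v` is a legal valuation, and it falsifies `S`.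
-/

namespace List

theorem eq_map_of_forall_mem_zip {α β : Type*} (f : α → β) {l : List α} {l' : List β}
    (hlen : l'.length = l.length) (h : ∀ x ∈ l.zip l', f x.1 = x.2) : l' = l.map f := by
  induction l generalizing l' with
  | nil => simpa using hlen
  | cons a l ih =>
    obtain _ | ⟨b, l'⟩ := l'
    · simp at hlen
    · simp only [zip_cons_cons, mem_cons, forall_eq_or_imp] at h
      rw [map_cons, h.1, ih (by simpa using hlen) h.2]

theorem apply_eq_of_mem_zip_map {α β : Type*} {f : α → β} {l : List α} {x : α × β}
    (hx : x ∈ l.zip (l.map f)) : f x.1 = x.2 := by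
  induction l with
  | nil => simp at hx
  | cons a l ih =>
    rcases List.mem_cons.1 hx with rfl | hx
    · rfl
    · exact ih hx

end List

section

variable {R : Rules} {tbl : C → List (Fin n) → Finset (Fin n)} {H : Set (Sequent C n)}
  {Γ Δ : Finset (Fm C × Fin n)}

namespace Deriv

theorem weaken_left (E : Finset (Fm C × Fin n)) (h : Deriv R tbl H ⟨Γ, Δ⟩) :
    Deriv R tbl H ⟨Γ ∪ E, Δ⟩ := by
  induction E using Finset.induction_on with
  | empty => simpa using h
  | insert a E _ ih => simpa only [Finset.union_insert] using ih.lweak a.1 a.2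

theorem weaken_right (E : Finset (Fm C × Fin n)) (h : Deriv R tbl H ⟨Γ, Δ⟩) :
    Deriv R tbl H ⟨Γ, Δ ∪ E⟩ := by
  induction E using Finset.induction_on with
  | empty => simpa using h
  | insert a E _ ih => simpa only [Finset.union_insert] using ih.rweak a.1 a.2

theorem mono {Γ' Δ' : Finset (Fm C × Fin n)} (hΓ : Γ ⊆ Γ') (hΔ : Δ ⊆ Δ')
    (h : Deriv R tbl H ⟨Γ, Δ⟩) : Deriv R tbl H ⟨Γ', Δ'⟩ := by
  simpa only [Finset.union_eq_right.2 hΓ, Finset.union_eq_right.2 hΔ] using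
    (h.weaken_left Γ').weaken_right Δ'

theorem of_mem_of_mem {φ : Fm C} {k k' : Fin n} (hk : k ≠ k') (h : (φ, k) ∈ Γ)
    (h' : (φ, k') ∈ Γ) : Deriv R tbl H ⟨Γ, Δ⟩ := by
  have hax : Deriv R tbl H ⟨{(φ, k)}, insert (φ, k) ∅⟩ := by simpa using ax φ k
  exact (rshift φ hk hax).mono (by simp [Finset.insert_subset_iff, h, h'])
    (Finset.empty_subset _)

theorem cut_image (hc : R.cut = true) (φ : Fm C) {K : Finset (Fin n)}
    (h : Deriv R tbl H ⟨Γ, Δ ∪ K.image fun k => (φ, k)⟩)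
    (hK : ∀ k ∈ K, Deriv R tbl H ⟨insert (φ, k) Γ, Δ⟩) : Deriv R tbl H ⟨Γ, Δ⟩ := by
  induction K using Finset.induction_on with
  | empty => simpa using h
  | insert a K _ ih =>
    refine ih ?_ fun k hk => hK k (Finset.mem_insert_of_mem hk)
    refine cut φ a hc ?_ ((hK a (Finset.mem_insert_self a K)).weaken_right _)
    simpa only [Finset.image_insert, Finset.union_insert] using h

theorem of_forall_insert (hc : R.cut = true) (hn : 0 < n) (φ : Fm C)
    (h : ∀ k, Deriv R tbl H ⟨insert (φ, k) Γ, Δ⟩) : Deriv R tbl H ⟨Γ, Δ⟩ :=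
  cut_image hc φ ((h ⟨0, hn⟩).lshift φ ⟨0, hn⟩) fun k _ => h k

theorem shift_false {v : Fm C → Fin n} (Λ : Finset (Fm C × Fin n))
    (hΛ : ∀ x ∈ Λ, v x.1 ≠ x.2) (h : Deriv R tbl H ⟨Γ, Δ ∪ Λ⟩) :
    Deriv R tbl H ⟨Γ ∪ Λ.image fun x => (x.1, v x.1), Δ⟩ := by
  induction Λ using Finset.induction_on generalizing Γ with
  | empty => simpa using h
  | insert x Λ _ ih =>
    rw [Finset.forall_mem_insert] at hΛ
    have h' : Deriv R tbl H ⟨Γ, insert (x.1, x.2) (Δ ∪ Λ)⟩ := by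
      simpa only [Finset.union_insert] using h
    simpa only [Finset.image_insert, Finset.union_insert, Finset.insert_union] using
      ih hΛ.2 (h'.rshift x.1 (Ne.symm hΛ.1))

theorem entails {S : Sequent C n} (h : Deriv R tbl H S) : Entails tbl H S := by
  induction h with
  | hyp hS => exact fun v _ hH => hH _ hS
  | ax ψ k =>
    exact fun v _ _ ha => ⟨_, Finset.mem_singleton_self _, ha _ (Finset.mem_singleton_self _)⟩
  | tableAx c args ks hlen _ =>
    intro v hv _ ha
    have hks := List.eq_map_of_forall_mem_zip v hlen fun x hx => ha x (List.mem_toFinset.2 hx)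
    exact ⟨_, Finset.mem_image_of_mem _ (hks ▸ hv c args), rfl⟩
  | lshift φ k _ ih =>
    intro v hv hH ha
    by_cases hk : v φ = k
    · obtain ⟨p, hp, e⟩ := ih v hv hH ((Finset.forall_mem_insert _ _ _).2 ⟨hk, ha⟩)
      exact ⟨p, Finset.mem_union_left _ hp, e⟩
    · exact ⟨(φ, v φ), Finset.mem_union_right _ (Finset.mem_image_of_mem _ (by simpa using hk)),
        rfl⟩
  | rshift φ hne _ ih =>
    intro v hv hH ha
    rw [Finset.forall_mem_insert] at ha
    obtain ⟨p, hp, e⟩ := ih v hv hH ha.2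
    rcases Finset.mem_insert.1 hp with rfl | hp
    · exact absurd (e.symm.trans ha.1) hne
    · exact ⟨p, hp, e⟩
  | lweak φ k _ ih =>
    exact fun v hv hH ha => ih v hv hH fun p hp => ha p (Finset.mem_insert_of_mem hp)
  | rweak φ k _ ih =>
    intro v hv hH ha
    obtain ⟨p, hp, e⟩ := ih v hv hH ha
    exact ⟨p, Finset.mem_insert_of_mem hp, e⟩
  | cut φ k _ _ _ ih ih' =>
    intro v hv hH ha
    obtain ⟨p, hp, e⟩ := ih v hv hH ha
    rcases Finset.mem_insert.1 hp with rfl | hp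
    · exact ih' v hv hH ((Finset.forall_mem_insert _ _ _).2 ⟨e, ha⟩)
    · exact ⟨p, hp, e⟩
  | @res _ _ _ φ k' _ _ hne _ _ ih ih' =>
    intro v hv hH ha
    by_cases hφ : v φ = k'
    · obtain ⟨p, hp, e⟩ := ih' v hv hH ha
      rcases Finset.mem_insert.1 hp with rfl | hp
      · exact absurd (hφ.symm.trans e) hne
      · exact ⟨p, Finset.mem_union_right _ hp, e⟩
    · obtain ⟨p, hp, e⟩ := ih v hv hH ha
      rcases Finset.mem_insert.1 hp with rfl | hp
      · exact absurd e hφ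
      · exact ⟨p, Finset.mem_union_left _ hp, e⟩
  | tableRuleS c args ks hlen _ _ ih =>
    intro v hv hH ha
    by_cases hall : ∀ p ∈ args.zip ks, v p.1 = p.2
    · have hks := List.eq_map_of_forall_mem_zip v hlen hall
      exact ⟨_, Finset.mem_union_right _ (Finset.mem_image_of_mem _ (hks ▸ hv c args)), rfl⟩
    · push Not at hall
      obtain ⟨p, hp, hpv⟩ := hall
      obtain ⟨q, hq, e⟩ := ih p hp v hv hH ha
      rcases Finset.mem_insert.1 hq with rfl | hq
      · exact absurd e hpv
      · exact ⟨q, Finset.mem_union_left _ hq, e⟩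
  | dualAx c args k Λ _ hΛ =>
    intro v hv _ ha
    have hk : v (Fm.app c args) = k := ha _ (Finset.mem_singleton_self _)
    obtain ⟨x, hxΘ, hxΛ⟩ := hΛ.1 _ ⟨args.map v, List.length_map _, hk ▸ hv c args, rfl⟩
    exact ⟨x, hxΛ, List.apply_eq_of_mem_zip_map (List.mem_toFinset.1 hxΘ)⟩
  | anteRule c args k _ _ ih =>
    intro v hv hH ha
    rw [Finset.forall_mem_insert] at ha
    have hk : v (Fm.app c args) = k := ha.1
    refine ih (args.map v) (List.length_map _) (hk ▸ hv c args) v hv hH fun p hp => ?_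
    rcases Finset.mem_union.1 hp with hp | hp
    · exact ha.2 p hp
    · exact List.apply_eq_of_mem_zip_map (List.mem_toFinset.1 hp)
  | multiShift φ K _ _ _ ih =>
    intro v hv hH ha
    by_cases hK : v φ ∈ K
    · obtain ⟨p, hp, e⟩ := ih _ hK v hv hH ((Finset.forall_mem_insert _ _ _).2 ⟨rfl, ha⟩)
      exact ⟨p, Finset.mem_union_left _ hp, e⟩
    · exact ⟨(φ, v φ), Finset.mem_union_right _
        (Finset.mem_image_of_mem _ (Finset.mem_compl.2 hK)), rfl⟩

end Deriv

def Consistent (R : Rules) (tbl : C → List (Fin n) → Finset (Fin n)) (H : Set (Sequent C n))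
    (Δ : Finset (Fm C × Fin n)) (M : Set (Fm C × Fin n)) : Prop :=
  ∀ Γ : Finset (Fm C × Fin n), ↑Γ ⊆ M → ¬ Deriv R tbl H ⟨Γ, Δ⟩

namespace Consistent

variable {M : Set (Fm C × Fin n)}

theorem exists_maximal (h : ¬ Deriv R tbl H ⟨Γ, Δ⟩) :
    ∃ M, ↑Γ ⊆ M ∧ Maximal (Consistent R tbl H Δ) M := by
  refine zorn_subset_nonempty {M | Consistent R tbl H Δ M}
    (fun c hc hch hne => ⟨⋃₀ c, fun Γ₀ hΓ₀ => ?_, fun _ => Set.subset_sUnion_of_mem⟩) _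
    fun Γ₀ hΓ₀ hd => h (hd.mono (Finset.coe_subset.1 hΓ₀) subset_rfl)
  obtain ⟨M, hM, hΓ₀M⟩ :=
    hch.directedOn.exists_mem_subset_of_finite_of_subset_sUnion hne Γ₀.finite_toSet hΓ₀
  exact hc hM Γ₀ hΓ₀M

theorem exists_deriv_of_not_insert {a : Fm C × Fin n}
    (h : ¬ Consistent R tbl H Δ (insert a M)) :
    ∃ Γ : Finset (Fm C × Fin n), ↑Γ ⊆ M ∧ Deriv R tbl H ⟨insert a Γ, Δ⟩ := by
  simp only [Consistent, not_forall, not_not] at h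
  obtain ⟨Γ, hΓ, hd⟩ := h
  exact ⟨Γ.erase a, by rwa [Finset.coe_erase, Set.sdiff_singleton_subset_iff],
    hd.mono (Finset.insert_erase_subset a Γ) subset_rfl⟩

theorem exists_mem_of_maximal (hc : R.cut = true) (hn : 0 < n)
    (hM : Maximal (Consistent R tbl H Δ) M) (φ : Fm C) : ∃ k, (φ, k) ∈ M := by
  by_contra hφ
  push Not at hφ
  have hΓ : ∀ k, ∃ Γ : Finset (Fm C × Fin n), ↑Γ ⊆ M ∧ Deriv R tbl H ⟨insert (φ, k) Γ, Δ⟩ :=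
    fun k => exists_deriv_of_not_insert fun hk =>
      hφ k (hM.2 hk (Set.subset_insert _ _) (Set.mem_insert _ _))
  choose Γ hΓM hΓ using hΓ
  refine hM.1 (Finset.univ.biUnion Γ) (by simpa using hΓM) (Deriv.of_forall_insert hc hn φ
    fun k => (hΓ k).mono ?_ subset_rfl)
  exact Finset.insert_subset_insert _ (Finset.subset_biUnion_of_mem Γ (Finset.mem_univ k))

theorem eq_of_mem (hM : Consistent R tbl H Δ M) {φ : Fm C} {k k' : Fin n} (h : (φ, k) ∈ M)
    (h' : (φ, k') ∈ M) : k = k' := by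
  by_contra hk
  exact hM {(φ, k), (φ, k')} (by simp [Set.insert_subset_iff, h, h'])
    (Deriv.of_mem_of_mem (φ := φ) hk (by simp) (by simp))

theorem exists_graph_of_maximal (hc : R.cut = true) (hn : 0 < n)
    (hM : Maximal (Consistent R tbl H Δ) M) : ∃ v : Fm C → Fin n, ∀ p, p ∈ M ↔ v p.1 = p.2 := by
  choose v hv using exists_mem_of_maximal hc hn hM
  exact ⟨v, fun p => ⟨fun hp => hM.1.eq_of_mem (hv p.1) hp, fun e => by simpa [e] using hv p.1⟩⟩

theorem sat_of_deriv (hM : Consistent R tbl H Δ M) {v : Fm C → Fin n}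
    (hv : ∀ p, p ∈ M ↔ v p.1 = p.2) {T : Sequent C n} (hT : Deriv R tbl H T) : Sat v T := by
  by_contra hsat
  simp only [Sat, Classical.not_imp, not_exists, not_and] at hsat
  obtain ⟨hant, hsuc⟩ := hsat
  have hT' : Deriv R tbl H ⟨T.ant, ∅ ∪ T.suc⟩ := by rw [Finset.empty_union]; exact hT
  refine hM _ ?_ ((hT'.shift_false T.suc hsuc).mono subset_rfl (Finset.empty_subset Δ))
  intro x hx
  rcases Finset.mem_union.1 hx with hx | hx
  · exact (hv x).2 (hant x hx)
  · obtain ⟨y, _, rfl⟩ := Finset.mem_image.1 hx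
    exact (hv _).2 rfl

end Consistent

theorem exists_choice_of_not_mem {C : Type} {tbl : C → List (Fin n) → Finset (Fin n)}
    {v : Fm C → Fin n} {c : C} {args : List (Fm C)} {k : Fin n} (hk : k ∉ tbl c (args.map v)) : ∃ Λ, Choice tbl c args k Λ ∧ ∀ x ∈ Λ, v x.1 ≠ x.2 := by
  classical
  refine ⟨(args.toFinset ×ˢ Finset.univ).filter fun x => v x.1 ≠ x.2 ∧
    ∃ Θ ∈ Theta tbl c args k, x ∈ Θ, ⟨?_, fun x hx => (Finset.mem_filter.1 hx).2.2⟩,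
    fun x hx => (Finset.mem_filter.1 hx).2.1⟩
  intro Θ hΘ
  obtain ⟨ks, hlen, hks, rfl⟩ := id hΘ
  have hfalse : ¬ ∀ x ∈ args.zip ks, v x.1 = x.2 := fun h =>
    hk (List.eq_map_of_forall_mem_zip v hlen h ▸ hks)
  push Not at hfalse
  obtain ⟨x, hx, hxv⟩ := hfalse
  refine ⟨x, List.mem_toFinset.2 hx, Finset.mem_filter.2 ⟨?_, hxv, _, hΘ, List.mem_toFinset.2 hx⟩⟩
  exact Finset.mem_product.2 ⟨List.mem_toFinset.2 (List.of_mem_zip hx).1, Finset.mem_univ _⟩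

theorem isVal_of_forall_deriv_sat (hd : R.dualAx = true) {v : Fm C → Fin n}
    (h : ∀ T, Deriv R tbl H T → Sat v T) : IsVal tbl v := by
  intro c args
  by_contra hk
  obtain ⟨Λ, hΛ, hΛv⟩ := exists_choice_of_not_mem hk
  obtain ⟨x, hx, e⟩ := h _ (Deriv.dualAx c args _ Λ hd hΛ) (by simp)
  exact hΛv x hx e

theorem Deriv.of_entails (hc : R.cut = true) (hd : R.dualAx = true) (hn : 0 < n)
    {S : Sequent C n} (hS : Entails tbl H S) : Deriv R tbl H S := by
  by_contra hS'
  obtain ⟨M, hSM, hM⟩ := Consistent.exists_maximal hS'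
  obtain ⟨v, hv⟩ := Consistent.exists_graph_of_maximal hc hn hM
  have hsat : ∀ T, Deriv R tbl H T → Sat v T := fun _ => hM.1.sat_of_deriv hv
  obtain ⟨p, hp, e⟩ := hS v (isVal_of_forall_deriv_sat hd hsat) (fun T hT => hsat T (.hyp hT))
    fun p hp => (hv p).1 (hSM hp)
  exact hM.1 {p} (by simpa [hv] using e) ((Deriv.ax p.1 p.2).mono (by simp) (by simpa using hp))

end

theorem stmt13_general (hn : 2 ≤ n) (tbl : C → List (Fin n) → Finset (Fin n))
    (H : Set (Sequent C n)) (S : Sequent C n) :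
    Deriv NMVL_Add tbl H S ↔ Entails tbl H S :=
  ⟨Deriv.entails, Deriv.of_entails rfl rfl (by omega)⟩

/-- soundness and strong completeness of NMVL_A^dd. -/
theorem stmt13 (hn : 2 ≤ n) (tbl : C → List (Fin n) → Finset (Fin n))
    (htbl : ∀ c ks, (tbl c ks).Nonempty) (H : Set (Sequent C n)) (S : Sequent C n) :
    Deriv NMVL_Add tbl H S ↔ Entails tbl H S :=
  stmt13_general hn tbl H S
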